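/- arXiv:1510.06566 — 4 statements merged into one kernel-verified Lean document; each statement's English description precedes it below -/
import Mathlib

section
/- Let m > 4 and let P ∈ 𝒫_{p,q} be double harmonic. Write K := p + m/2 and L := q + m/2. Then A(C P) = ((KL − K − L)/((K−1)(L−1))) C(A P) + (K+L) P − (K−1)^{-1} S_x(S_u P) − (L−1)^{-1} S_u(S_x P). (This is the relation A C = ((H_x + H_x H_u + H_u)/((H_x+1)(H_u+1))) C A − (H_x+H_u) + (H_x+1)^{-1} S_x S_u + (H_u+1)^{-1} S_u S_x in the transvector algebra, with H_x = −(𝔼_x+m/2), H_u = −(𝔼_u+m/2) evaluated on P.) -/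
open MvPolynomial

noncomputable section

/-- Polynomials in two vector variables `x = (x_1,…,x_m)` (the `Sum.inl` variables)
and `u = (u_1,…,u_m)` (the `Sum.inr` variables), with complex coefficients. -/
abbrev PP (m : ℕ) := MvPolynomial (Fin m ⊕ Fin m) ℂ

/-- The Laplace operator `Δ_x` in the `x`-variables. -/
def lapX (m : ℕ) (P : PP m) : PP m :=
  ∑ j : Fin m, pderiv (Sum.inl j) (pderiv (Sum.inl j) P)

/-- The Laplace operator `Δ_u` in the `u`-variables. -/
def lapU (m : ℕ) (P : PP m) : PP m :=
  ∑ j : Fin m, pderiv (Sum.inr j) (pderiv (Sum.inr j) P)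

/-- The mixed operator `⟨∂_u,∂_x⟩ = Σ_j ∂_{u_j} ∂_{x_j}`. -/
def dudx (m : ℕ) (P : PP m) : PP m :=
  ∑ j : Fin m, pderiv (Sum.inr j) (pderiv (Sum.inl j) P)

/-- The operator `⟨x,∂_u⟩ = Σ_j x_j ∂_{u_j}`. -/
def xdu (m : ℕ) (P : PP m) : PP m :=
  ∑ j : Fin m, X (Sum.inl j) * pderiv (Sum.inr j) P

/-- The operator `⟨u,∂_x⟩ = Σ_j u_j ∂_{x_j}`. -/
def udx (m : ℕ) (P : PP m) : PP m :=
  ∑ j : Fin m, X (Sum.inr j) * pderiv (Sum.inl j) P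

/-- The polynomial `|x|² = Σ_j x_j²`. -/
def nx2 (m : ℕ) : PP m := ∑ j : Fin m, X (Sum.inl j) ^ 2

/-- The polynomial `|u|² = Σ_j u_j²`. -/
def nu2 (m : ℕ) : PP m := ∑ j : Fin m, X (Sum.inr j) ^ 2

/-- The polynomial `⟨u,x⟩ = Σ_j u_j x_j`. -/
def uxP (m : ℕ) : PP m := ∑ j : Fin m, X (Sum.inr j) * X (Sum.inl j)

/-- `P` is homogeneous of degree `p` in the `x`-variables and `q` in the `u`-variables. -/
def IsBihom (m p q : ℕ) (P : PP m) : Prop :=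
  P.IsWeightedHomogeneous (Sum.elim (fun _ => 1) (fun _ => 0)) p ∧
  P.IsWeightedHomogeneous (Sum.elim (fun _ => 0) (fun _ => 1)) q

/-- `P` belongs to the space `ℋ_{k,l}` of simplicial harmonics. -/
def IsSimp (m k l : ℕ) (P : PP m) : Prop :=
  IsBihom m k l P ∧ lapX m P = 0 ∧ lapU m P = 0 ∧ dudx m P = 0 ∧ xdu m P = 0

/-- The transvector generator `S_x` taken on bidegree `(p,·)`. -/
def opSx (m : ℕ) (p : ℤ) (P : PP m) : PP m :=
  xdu m P - (2 * (p : ℂ) + m - 2)⁻¹ • (nx2 m * dudx m P)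

/-- The transvector generator `S_u` taken on bidegree `(·,q)`. -/
def opSu (m : ℕ) (q : ℤ) (P : PP m) : PP m :=
  udx m P - (2 * (q : ℂ) + m - 2)⁻¹ • (nu2 m * dudx m P)

/-- The transvector generator `A = ⟨∂_u,∂_x⟩`. -/
def opA (m : ℕ) (P : PP m) : PP m := dudx m P

/-- The transvector generator `C` taken on bidegree `(p,q)`. -/
def opC (m : ℕ) (p q : ℤ) (P : PP m) : PP m :=
  uxP m * P - (2 * (p : ℂ) + m - 2)⁻¹ • (nx2 m * udx m P)
    - (2 * (q : ℂ) + m - 2)⁻¹ • (nu2 m * xdu m P)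
    + ((2 * (p : ℂ) + m - 2) * (2 * (q : ℂ) + m - 2))⁻¹ • (nx2 m * (nu2 m * dudx m P))

/-- `SuIter m n q P`: apply `S_u` `n` times to `P`, starting at `u`-degree `q`
(each application raises the `u`-degree by one). -/
def SuIter (m : ℕ) : ℕ → ℤ → PP m → PP m
  | 0, _, P => P
  | n+1, q, P => SuIter m n (q+1) (opSu m q P)

/-- `SxIter m n p P`: apply `S_x` `n` times to `P`, starting at `x`-degree `p`
(each application raises the `x`-degree by one). -/
def SxIter (m : ℕ) : ℕ → ℤ → PP m → PP m
  | 0, _, P => P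
  | n+1, p, P => SxIter m n (p+1) (opSx m p P)

/-- `CIter m n p q P`: apply `C` `n` times to `P`, starting at bidegree `(p,q)`. -/
def CIter (m : ℕ) : ℕ → ℤ → ℤ → PP m → PP m
  | 0, _, _, P => P
  | n+1, p, q, P => CIter m n (p+1) (q+1) (opC m p q P)

/-- `AIter m n P`: apply `A` `n` times to `P`. -/
def AIter (m : ℕ) (n : ℕ) (P : PP m) : PP m := (opA m)^[n] P

/-- The rising factorial `a^{(n)} = a(a+1)⋯(a+n-1)`. -/
def asc (a : ℂ) : ℕ → ℂ
  | 0 => 1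
  | n+1 => asc a n * (a + n)

/-- The falling factorial `a_{(n)} = a(a-1)⋯(a-n+1)`. -/
def desc (a : ℂ) : ℕ → ℂ
  | 0 => 1
  | n+1 => desc a n * (a - n)


-- ==================== auxiliary lemmas ====================

theorem pderiv_pderiv_comm' {σ R : Type*} [CommSemiring R] (i j : σ) (f : MvPolynomial σ R) :
    pderiv i (pderiv j f) = pderiv j (pderiv i f) := by
  classical
  induction f using MvPolynomial.induction_on with
  | C a => simp
  | add p q hp hq => simp [hp, hq]
  | mul_X p k hp =>
    have hz : ∀ a b : σ, pderiv a ((Pi.single b 1 : σ → MvPolynomial σ R) k) = 0 := by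
      intro a b; rw [Pi.single_apply]; split_ifs <;> simp
    simp [pderiv_mul, hp, hz]
    ring

theorem X_mul_pderiv_monomial' {σ : Type*} [DecidableEq σ] (i : σ) (d : σ →₀ ℕ) (c : ℂ) :
    X i * pderiv i (monomial d c) = ((d i : ℕ) : ℂ) • monomial d c := by
  rw [pderiv_monomial]
  by_cases h : d i = 0
  · simp [h]
  · have hd : Finsupp.single i 1 + (d - Finsupp.single i 1) = d := by
      ext a
      by_cases ha : a = i
      · subst ha
        simp [Finsupp.single_apply, Nat.add_sub_cancel' (Nat.one_le_iff_ne_zero.2 h)]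
      · simp [Finsupp.single_apply, Ne.symm ha, ha]
    calc X i * monomial (d - Finsupp.single i 1) (c * d i)
        = X i ^ 1 * monomial (d - Finsupp.single i 1) (c * d i) := by rw [pow_one]
      _ = monomial (Finsupp.single i 1 + (d - Finsupp.single i 1)) (c * d i) := by
          rw [monomial_single_add]
      _ = ((d i : ℕ) : ℂ) • monomial d c := by
          rw [hd, smul_monomial, mul_comm]; norm_num

/-- Euler operator in the x variables. -/
def eulX (m : ℕ) (P : PP m) : PP m := ∑ j : Fin m, X (Sum.inl j) * pderiv (Sum.inl j) P

/-- Euler operator in the u variables. -/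
def eulU (m : ℕ) (P : PP m) : PP m := ∑ j : Fin m, X (Sum.inr j) * pderiv (Sum.inr j) P

theorem eulX_eq {m p : ℕ} (P : PP m)
    (h : P.IsWeightedHomogeneous (Sum.elim (fun _ => 1) fun _ => 0) p) :
    eulX m P = (p : ℂ) • P := by
  rw [eulX]
  conv_lhs => rw [← P.support_sum_monomial_coeff]
  conv_rhs => rw [← P.support_sum_monomial_coeff]
  simp only [map_sum, Finset.mul_sum]
  rw [Finset.sum_comm, Finset.smul_sum]
  refine Finset.sum_congr rfl fun d hd => ?_
  simp only [X_mul_pderiv_monomial']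
  rw [← Finset.sum_smul]
  congr 1
  have hw := h (mem_support_iff.1 hd)
  rw [Finsupp.weight_apply, Finsupp.sum_fintype, Fintype.sum_sum_type] at hw
  · simp only [Sum.elim_inl, Sum.elim_inr, smul_eq_mul, mul_one, mul_zero,
      Finset.sum_const_zero, add_zero] at hw
    rw [← hw]
    push_cast
    ring
  · intro i; simp

theorem eulU_eq {m q : ℕ} (P : PP m)
    (h : P.IsWeightedHomogeneous (Sum.elim (fun _ => 0) fun _ => 1) q) :
    eulU m P = (q : ℂ) • P := by
  rw [eulU]
  conv_lhs => rw [← P.support_sum_monomial_coeff]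
  conv_rhs => rw [← P.support_sum_monomial_coeff]
  simp only [map_sum, Finset.mul_sum]
  rw [Finset.sum_comm, Finset.smul_sum]
  refine Finset.sum_congr rfl fun d hd => ?_
  simp only [X_mul_pderiv_monomial']
  rw [← Finset.sum_smul]
  congr 1
  have hw := h (mem_support_iff.1 hd)
  rw [Finsupp.weight_apply, Finsupp.sum_fintype, Fintype.sum_sum_type] at hw
  · simp only [Sum.elim_inl, Sum.elim_inr, smul_eq_mul, mul_one, mul_zero,
      Finset.sum_const_zero, zero_add] at hw
    rw [← hw]
    push_cast
    ring
  · intro i; simp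

theorem pderiv_nx2_inl (m : ℕ) (j : Fin m) :
    pderiv (Sum.inl j) (nx2 m) = 2 * X (Sum.inl j) := by
  rw [nx2, map_sum, Finset.sum_eq_single j]
  · rw [pderiv_pow, pderiv_X_self]; push_cast; ring
  · intro i _ hij
    rw [pderiv_pow, pderiv_X_of_ne (by simpa using hij)]; ring
  · simp

theorem pderiv_nx2_inr (m : ℕ) (j : Fin m) : pderiv (Sum.inr j) (nx2 m) = 0 := by
  rw [nx2, map_sum]
  refine Finset.sum_eq_zero fun i _ => ?_
  rw [pderiv_pow, pderiv_X_of_ne (by simp)]; ring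

theorem pderiv_nu2_inr (m : ℕ) (j : Fin m) :
    pderiv (Sum.inr j) (nu2 m) = 2 * X (Sum.inr j) := by
  rw [nu2, map_sum, Finset.sum_eq_single j]
  · rw [pderiv_pow, pderiv_X_self]; push_cast; ring
  · intro i _ hij
    rw [pderiv_pow, pderiv_X_of_ne (by simpa using hij)]; ring
  · simp

theorem pderiv_nu2_inl (m : ℕ) (j : Fin m) : pderiv (Sum.inl j) (nu2 m) = 0 := by
  rw [nu2, map_sum]
  refine Finset.sum_eq_zero fun i _ => ?_
  rw [pderiv_pow, pderiv_X_of_ne (by simp)]; ring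

theorem pderiv_uxP_inl (m : ℕ) (j : Fin m) :
    pderiv (Sum.inl j) (uxP m) = X (Sum.inr j) := by
  rw [uxP, map_sum, Finset.sum_eq_single j]
  · rw [pderiv_mul, pderiv_X_self, pderiv_X_of_ne (by simp)]; ring
  · intro i _ hij
    rw [pderiv_mul,
      pderiv_X_of_ne (by intro h; first | exact hij (Sum.inl.inj h) | exact hij (Sum.inr.inj h) | cases h),
      pderiv_X_of_ne (by intro h; first | exact hij (Sum.inl.inj h) | exact hij (Sum.inr.inj h) | cases h)]
    ring
  · simp

theorem pderiv_uxP_inr (m : ℕ) (j : Fin m) :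
    pderiv (Sum.inr j) (uxP m) = X (Sum.inl j) := by
  rw [uxP, map_sum, Finset.sum_eq_single j]
  · rw [pderiv_mul, pderiv_X_self, pderiv_X_of_ne (by simp)]; ring
  · intro i _ hij
    rw [pderiv_mul,
      pderiv_X_of_ne (by intro h; first | exact hij (Sum.inl.inj h) | exact hij (Sum.inr.inj h) | cases h),
      pderiv_X_of_ne (by intro h; first | exact hij (Sum.inl.inj h) | exact hij (Sum.inr.inj h) | cases h)]
    ring
  · simp

-- linearity lemmas
theorem dudx_add (m : ℕ) (P Q : PP m) : dudx m (P + Q) = dudx m P + dudx m Q := by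
  simp [dudx, Finset.sum_add_distrib]

theorem dudx_sub (m : ℕ) (P Q : PP m) : dudx m (P - Q) = dudx m P - dudx m Q := by
  simp [dudx, Finset.sum_sub_distrib]

theorem dudx_smul (m : ℕ) (c : ℂ) (P : PP m) : dudx m (c • P) = c • dudx m P := by
  simp [dudx, Finset.smul_sum]

theorem xdu_add (m : ℕ) (P Q : PP m) : xdu m (P + Q) = xdu m P + xdu m Q := by
  simp [xdu, Finset.sum_add_distrib, mul_add]

theorem xdu_sub (m : ℕ) (P Q : PP m) : xdu m (P - Q) = xdu m P - xdu m Q := by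
  simp [xdu, Finset.sum_sub_distrib, mul_sub]

theorem xdu_smul (m : ℕ) (c : ℂ) (P : PP m) : xdu m (c • P) = c • xdu m P := by
  simp [xdu, Finset.smul_sum, mul_smul_comm]

theorem udx_add (m : ℕ) (P Q : PP m) : udx m (P + Q) = udx m P + udx m Q := by
  simp [udx, Finset.sum_add_distrib, mul_add]

theorem udx_sub (m : ℕ) (P Q : PP m) : udx m (P - Q) = udx m P - udx m Q := by
  simp [udx, Finset.sum_sub_distrib, mul_sub]

theorem udx_smul (m : ℕ) (c : ℂ) (P : PP m) : udx m (c • P) = c • udx m P := by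
  simp [udx, Finset.smul_sum, mul_smul_comm]

-- structural commutation lemmas
theorem smul_two_eq (m : ℕ) (y : PP m) : (2 : ℂ) • y = 2 * y := by
  rw [show ((2:ℂ)) = ((2:ℕ):ℂ) by norm_num, Nat.cast_smul_eq_nsmul, nsmul_eq_mul]
  norm_num

theorem dudx_nx2_mul (m : ℕ) (Q : PP m) :
    dudx m (nx2 m * Q) = (2 : ℂ) • xdu m Q + nx2 m * dudx m Q := by
  have key : ∀ j : Fin m, pderiv (Sum.inr j) (pderiv (Sum.inl j) (nx2 m * Q))
      = 2 * (X (Sum.inl j) * pderiv (Sum.inr j) Q)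
        + nx2 m * pderiv (Sum.inr j) (pderiv (Sum.inl j) Q) := by
    intro j
    have h2 : (2 : PP m) = C (2 : ℂ) := (map_ofNat C 2).symm
    rw [pderiv_mul, pderiv_nx2_inl, map_add, pderiv_mul, pderiv_mul, pderiv_mul,
      pderiv_nx2_inr, pderiv_X_of_ne (by simp), h2, pderiv_C]
    ring
  rw [dudx, Finset.sum_congr rfl fun j _ => key j, Finset.sum_add_distrib]
  rw [smul_two_eq, xdu, dudx, Finset.mul_sum, Finset.mul_sum]

theorem dudx_nu2_mul (m : ℕ) (Q : PP m) :
    dudx m (nu2 m * Q) = (2 : ℂ) • udx m Q + nu2 m * dudx m Q := by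
  have key : ∀ j : Fin m, pderiv (Sum.inr j) (pderiv (Sum.inl j) (nu2 m * Q))
      = 2 * (X (Sum.inr j) * pderiv (Sum.inl j) Q)
        + nu2 m * pderiv (Sum.inr j) (pderiv (Sum.inl j) Q) := by
    intro j
    rw [pderiv_mul, pderiv_nu2_inl, zero_mul, zero_add, pderiv_mul, pderiv_nu2_inr]
    ring
  rw [dudx, Finset.sum_congr rfl fun j _ => key j, Finset.sum_add_distrib]
  rw [smul_two_eq, udx, dudx, Finset.mul_sum, Finset.mul_sum]

theorem xdu_nu2_mul (m : ℕ) (Q : PP m) :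
    xdu m (nu2 m * Q) = (2 : ℂ) • (uxP m * Q) + nu2 m * xdu m Q := by
  have key : ∀ j : Fin m, X (Sum.inl j) * pderiv (Sum.inr j) (nu2 m * Q)
      = 2 * (X (Sum.inr j) * X (Sum.inl j) * Q)
        + nu2 m * (X (Sum.inl j) * pderiv (Sum.inr j) Q) := by
    intro j
    rw [pderiv_mul, pderiv_nu2_inr]
    ring
  rw [xdu, Finset.sum_congr rfl fun j _ => key j, Finset.sum_add_distrib]
  rw [smul_two_eq, uxP, xdu, Finset.sum_mul, Finset.mul_sum, Finset.mul_sum]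

theorem udx_nx2_mul (m : ℕ) (Q : PP m) :
    udx m (nx2 m * Q) = (2 : ℂ) • (uxP m * Q) + nx2 m * udx m Q := by
  have key : ∀ j : Fin m, X (Sum.inr j) * pderiv (Sum.inl j) (nx2 m * Q)
      = 2 * (X (Sum.inr j) * X (Sum.inl j) * Q)
        + nx2 m * (X (Sum.inr j) * pderiv (Sum.inl j) Q) := by
    intro j
    rw [pderiv_mul, pderiv_nx2_inl]
    ring
  rw [udx, Finset.sum_congr rfl fun j _ => key j, Finset.sum_add_distrib]
  rw [smul_two_eq, uxP, udx, Finset.sum_mul, Finset.mul_sum, Finset.mul_sum]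

theorem dudx_uxP_mul (m : ℕ) (Q : PP m) :
    dudx m (uxP m * Q)
      = (m : ℂ) • Q + eulX m Q + eulU m Q + uxP m * dudx m Q := by
  have key : ∀ j : Fin m,
      pderiv (Sum.inr j) (pderiv (Sum.inl j) (uxP m * Q))
        = Q + X (Sum.inl j) * pderiv (Sum.inl j) Q + X (Sum.inr j) * pderiv (Sum.inr j) Q
          + uxP m * pderiv (Sum.inr j) (pderiv (Sum.inl j) Q) := by
    intro j
    rw [pderiv_mul, pderiv_uxP_inl, map_add, pderiv_mul, pderiv_mul, pderiv_uxP_inr,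
      pderiv_X_self]
    ring
  rw [dudx, Finset.sum_congr rfl fun j _ => key j, Finset.sum_add_distrib,
    Finset.sum_add_distrib, Finset.sum_add_distrib, Finset.sum_const, Finset.card_univ,
    Fintype.card_fin, show (m • Q : PP m) = (m : ℂ) • Q from (Nat.cast_smul_eq_nsmul ℂ m Q).symm,
    eulX, eulU, dudx, Finset.mul_sum]

theorem dudx_udx (m : ℕ) (Q : PP m) :
    dudx m (udx m Q) = lapX m Q + udx m (dudx m Q) := by
  have key : ∀ j : Fin m,
      pderiv (Sum.inr j) (pderiv (Sum.inl j) (udx m Q))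
        = pderiv (Sum.inl j) (pderiv (Sum.inl j) Q)
          + ∑ i : Fin m, X (Sum.inr i)
              * pderiv (Sum.inr j) (pderiv (Sum.inl j) (pderiv (Sum.inl i) Q)) := by
    intro j
    rw [udx, map_sum, map_sum]
    have t : ∀ i : Fin m,
        pderiv (Sum.inr j) (pderiv (Sum.inl j) (X (Sum.inr i) * pderiv (Sum.inl i) Q))
          = (if i = j then pderiv (Sum.inl j) (pderiv (Sum.inl i) Q) else 0)
            + X (Sum.inr i) * pderiv (Sum.inr j) (pderiv (Sum.inl j) (pderiv (Sum.inl i) Q)) := by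
      intro i
      rw [pderiv_mul, pderiv_X_of_ne (by simp), zero_mul, zero_add, pderiv_mul]
      by_cases h : i = j
      · subst h; rw [pderiv_X_self]; simp
      · rw [pderiv_X_of_ne (by simpa using h)]; simp [h]
    rw [Finset.sum_congr rfl fun i _ => t i, Finset.sum_add_distrib, Finset.sum_ite_eq'
      Finset.univ j fun i => pderiv (Sum.inl j) (pderiv (Sum.inl i) Q)]
    simp
  rw [dudx, Finset.sum_congr rfl fun j _ => key j, Finset.sum_add_distrib]
  congr 1
  rw [udx, dudx, Finset.sum_comm]
  refine Finset.sum_congr rfl fun i _ => ?_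
  rw [map_sum, Finset.mul_sum]
  refine Finset.sum_congr rfl fun j _ => ?_
  rw [show pderiv (Sum.inr j) (pderiv (Sum.inl j) (pderiv (Sum.inl i) Q))
      = pderiv (Sum.inl i) (pderiv (Sum.inr j) (pderiv (Sum.inl j) Q)) from by
    rw [pderiv_pderiv_comm' (Sum.inl j) (Sum.inl i) Q,
      pderiv_pderiv_comm' (Sum.inr j) (Sum.inl i)]]

theorem dudx_xdu (m : ℕ) (Q : PP m) :
    dudx m (xdu m Q) = lapU m Q + xdu m (dudx m Q) := by
  have key : ∀ j : Fin m,
      pderiv (Sum.inr j) (pderiv (Sum.inl j) (xdu m Q))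
        = pderiv (Sum.inr j) (pderiv (Sum.inr j) Q)
          + ∑ i : Fin m, X (Sum.inl i)
              * pderiv (Sum.inr j) (pderiv (Sum.inl j) (pderiv (Sum.inr i) Q)) := by
    intro j
    rw [xdu, map_sum, map_sum]
    have t : ∀ i : Fin m,
        pderiv (Sum.inr j) (pderiv (Sum.inl j) (X (Sum.inl i) * pderiv (Sum.inr i) Q))
          = (if i = j then pderiv (Sum.inr j) (pderiv (Sum.inr i) Q) else 0)
            + X (Sum.inl i) * pderiv (Sum.inr j) (pderiv (Sum.inl j) (pderiv (Sum.inr i) Q)) := by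
      intro i
      by_cases h : i = j
      · subst h
        rw [pderiv_mul, pderiv_X_self, one_mul, map_add, pderiv_mul,
          pderiv_X_of_ne (by simp), zero_mul, zero_add]
        simp
      · rw [pderiv_mul, pderiv_X_of_ne (by simpa using h), zero_mul, zero_add,
          pderiv_mul, pderiv_X_of_ne (by simp), zero_mul, zero_add]
        simp [h]
    rw [Finset.sum_congr rfl fun i _ => t i, Finset.sum_add_distrib, Finset.sum_ite_eq'
      Finset.univ j fun i => pderiv (Sum.inr j) (pderiv (Sum.inr i) Q)]
    simp
  rw [dudx, Finset.sum_congr rfl fun j _ => key j, Finset.sum_add_distrib]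
  congr 1
  rw [xdu, dudx, Finset.sum_comm]
  refine Finset.sum_congr rfl fun i _ => ?_
  rw [map_sum, Finset.mul_sum]
  refine Finset.sum_congr rfl fun j _ => ?_
  rw [show pderiv (Sum.inr j) (pderiv (Sum.inl j) (pderiv (Sum.inr i) Q))
      = pderiv (Sum.inr i) (pderiv (Sum.inr j) (pderiv (Sum.inl j) Q)) from by
    rw [pderiv_pderiv_comm' (Sum.inl j) (Sum.inr i) Q,
      pderiv_pderiv_comm' (Sum.inr j) (Sum.inr i)]]

set_option maxHeartbeats 1000000 in
/-- the relation `A C = ((KL−K−L)/((K−1)(L−1))) C A + (K+L)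
  − (K−1)⁻¹ S_x S_u − (L−1)⁻¹ S_u S_x`, evaluated on a double harmonic `P ∈ 𝒫_{p,q}`,
with `K = p + m/2` and `L = q + m/2`. -/
theorem stmt_5 (m : ℕ) (hm : 4 < m) (p q : ℕ) (P : PP m)
    (hbh : IsBihom m p q P) (hx : lapX m P = 0) (hu : lapU m P = 0)
    (K L : ℂ) (hK : K = (p : ℂ) + m / 2) (hL : L = (q : ℂ) + m / 2) :
    opA m (opC m (p : ℤ) (q : ℤ) P)
      = ((K * L - K - L) / ((K - 1) * (L - 1))) • opC m ((p : ℤ) - 1) ((q : ℤ) - 1) (opA m P)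
        + (K + L) • P
        - (K - 1)⁻¹ • opSx m ((p : ℤ) - 1) (opSu m (q : ℤ) P)
        - (L - 1)⁻¹ • opSu m ((q : ℤ) - 1) (opSx m (p : ℤ) P) := by
  have hEx : eulX m P = (p : ℂ) • P := eulX_eq P hbh.1
  have hEu : eulU m P = (q : ℂ) • P := eulU_eq P hbh.2
  have hswap : ∀ R : PP m, nu2 m * (nx2 m * R) = nx2 m * (nu2 m * R) := fun R => by ring
  subst hK; subst hL
  have hm2 : ((m : ℂ)) ≠ 0 := by
    exact_mod_cast Nat.cast_ne_zero.2 (by omega)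
  have cast_ne : ∀ n : ℕ, n ≠ 0 → ((n : ℂ)) ≠ 0 := fun n hn => Nat.cast_ne_zero.2 hn
  have e1 : 2 * (p : ℂ) + m - 2 = ((2 * p + (m - 2) : ℕ) : ℂ) := by
    push_cast [Nat.cast_sub (show 2 ≤ m by omega)]; ring
  have e2 : 2 * (q : ℂ) + m - 2 = ((2 * q + (m - 2) : ℕ) : ℂ) := by
    push_cast [Nat.cast_sub (show 2 ≤ m by omega)]; ring
  have e3 : 2 * ((p : ℂ) - 1) + m - 2 = ((2 * p + (m - 4) : ℕ) : ℂ) := by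
    push_cast [Nat.cast_sub (show 4 ≤ m by omega)]; ring
  have e4 : 2 * ((q : ℂ) - 1) + m - 2 = ((2 * q + (m - 4) : ℕ) : ℂ) := by
    push_cast [Nat.cast_sub (show 4 ≤ m by omega)]; ring
  have hK' : 2 * (p : ℂ) + m - 2 ≠ 0 := by rw [e1]; exact cast_ne _ (by omega)
  have hL' : 2 * (q : ℂ) + m - 2 ≠ 0 := by rw [e2]; exact cast_ne _ (by omega)
  have hK2 : 2 * ((p : ℂ) - 1) + m - 2 ≠ 0 := by rw [e3]; exact cast_ne _ (by omega)
  have hL2 : 2 * ((q : ℂ) - 1) + m - 2 ≠ 0 := by rw [e4]; exact cast_ne _ (by omega)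
  have hKm1 : (p : ℂ) + (m : ℂ) / 2 - 1 ≠ 0 := by
    have : (p : ℂ) + (m : ℂ) / 2 - 1 = (2 * (p : ℂ) + m - 2) / 2 := by ring
    rw [this]
    exact div_ne_zero hK' two_ne_zero
  have hLm1 : (q : ℂ) + (m : ℂ) / 2 - 1 ≠ 0 := by
    have : (q : ℂ) + (m : ℂ) / 2 - 1 = (2 * (q : ℂ) + m - 2) / 2 := by ring
    rw [this]
    exact div_ne_zero hL' two_ne_zero
  have hinv1 : ((p:ℂ) + (m:ℂ)/2 - 1)⁻¹ = 2 * (2*(p:ℂ) + m - 2)⁻¹ := by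
    rw [show (p:ℂ) + (m:ℂ)/2 - 1 = (2*(p:ℂ) + m - 2)/2 by ring, inv_div, div_eq_mul_inv,
      mul_comm]
  have hinv2 : ((q:ℂ) + (m:ℂ)/2 - 1)⁻¹ = 2 * (2*(q:ℂ) + m - 2)⁻¹ := by
    rw [show (q:ℂ) + (m:ℂ)/2 - 1 = (2*(q:ℂ) + m - 2)/2 by ring, inv_div, div_eq_mul_inv,
      mul_comm]
  have hinv1' : ((p:ℂ) + (m:ℂ)*2⁻¹ - 1)⁻¹ = 2 * (2*(p:ℂ) + m - 2)⁻¹ := by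
    rw [show (p:ℂ) + (m:ℂ)*2⁻¹ - 1 = (2*(p:ℂ) + m - 2)/2 by ring, inv_div, div_eq_mul_inv,
      mul_comm]
  have hinv2' : ((q:ℂ) + (m:ℂ)*2⁻¹ - 1)⁻¹ = 2 * (2*(q:ℂ) + m - 2)⁻¹ := by
    rw [show (q:ℂ) + (m:ℂ)*2⁻¹ - 1 = (2*(q:ℂ) + m - 2)/2 by ring, inv_div, div_eq_mul_inv,
      mul_comm]
  have pmul_add : ∀ Y R S : PP m, Y * (R + S) = Y * R + Y * S := fun _ _ _ => mul_add _ _ _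
  have pmul_sub : ∀ Y R S : PP m, Y * (R - S) = Y * R - Y * S := fun _ _ _ => mul_sub _ _ _
  have pmul_smul : ∀ (c : ℂ) (Y R : PP m), Y * (c • R) = c • (Y * R) := fun c Y R =>
    mul_smul_comm c Y R
  have psmul_add : ∀ (c : ℂ) (R S : PP m), c • (R + S) = c • R + c • S := fun _ _ _ =>
    smul_add _ _ _
  have psmul_sub : ∀ (c : ℂ) (R S : PP m), c • (R - S) = c • R - c • S := fun _ _ _ =>
    smul_sub _ _ _
  have psmul_smul : ∀ (c d : ℂ) (R : PP m), c • (d • R) = (c * d) • R := fun _ _ _ =>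
    smul_smul _ _ _
  simp only [opA, opC, opSx, opSu, Int.cast_sub, Int.cast_natCast, Int.cast_one,
    dudx_add, dudx_sub, dudx_smul, xdu_add, xdu_sub, xdu_smul, udx_add, udx_sub, udx_smul,
    dudx_uxP_mul, dudx_nx2_mul, dudx_nu2_mul, dudx_udx, dudx_xdu, xdu_nu2_mul, udx_nx2_mul,
    hx, hu, hEx, hEu, hswap, zero_add, add_zero, pmul_add, pmul_sub, pmul_smul,
    psmul_add, psmul_sub, psmul_smul, mul_inv, div_eq_mul_inv, hinv1, hinv2, hinv1', hinv2']
  match_scalars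
  · ring
  · linear_combination (-((2*(q:ℂ)+(m:ℂ)-2) * (2*(q:ℂ)+(m:ℂ)-2)⁻¹)) * mul_inv_cancel₀ hK'
      - mul_inv_cancel₀ hL'
  · ring
  · linear_combination ((2*(p:ℂ)+(m:ℂ)-2)⁻¹ * ((2*((p:ℂ)-1)+(m:ℂ)-2) * (2*((p:ℂ)-1)+(m:ℂ)-2)⁻¹
        + 2*(2*((p:ℂ)-1)+(m:ℂ)-2)⁻¹)) * mul_inv_cancel₀ hL'
      + (2*(p:ℂ)+(m:ℂ)-2)⁻¹ * mul_inv_cancel₀ hK2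
  · ring
  · linear_combination ((2*(q:ℂ)+(m:ℂ)-2)⁻¹ * ((2*((q:ℂ)-1)+(m:ℂ)-2) * (2*((q:ℂ)-1)+(m:ℂ)-2)⁻¹
        + 2*(2*((q:ℂ)-1)+(m:ℂ)-2)⁻¹)) * mul_inv_cancel₀ hK'
      + (2*(q:ℂ)+(m:ℂ)-2)⁻¹ * mul_inv_cancel₀ hL2
  · linear_combination ((2*(p:ℂ)+(m:ℂ)-2)⁻¹ * (2*(q:ℂ)+(m:ℂ)-2)⁻¹
        * (-((2*((q:ℂ)-1)+(m:ℂ)-2) * (2*((q:ℂ)-1)+(m:ℂ)-2)⁻¹)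
          - 2*(2*((q:ℂ)-1)+(m:ℂ)-2)⁻¹)) * mul_inv_cancel₀ hK2
      + ((2*(p:ℂ)+(m:ℂ)-2)⁻¹ * (2*(q:ℂ)+(m:ℂ)-2)⁻¹
          * (-1 - 2*(2*((p:ℂ)-1)+(m:ℂ)-2)⁻¹)) * mul_inv_cancel₀ hL2
end
end

section
/- Let m > 4 and k ≥ l ≥ 0. Set z_1 = x_1 + i x_2, z_2 = x_3 + i x_4, w_1 = u_1 + i u_2, w_2 = u_3 + i u_4, and define the polynomial H_{k,l}(x,u) := z̄_1^{k−l} (z̄_1 w̄_2 − z̄_2 w̄_1)^l (bars denoting complex conjugation of the variables, so z̄_1 = x_1 − i x_2, etc.). Then H_{k,l} belongs to the space ℋ_{k,l} of simplicial harmonics, and ⟨u,∂_x⟩^{k−l} H_{k,l}(x,u) = (−1)^l (k−l)! H_{k,l}(u,x), where H_{k,l}(u,x) = w̄_1^{k−l} (w̄_1 z̄_2 − w̄_2 z̄_1)^l is obtained by interchanging the roles of x and u. -/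
open MvPolynomial

noncomputable section

/-!
The four forms `z̄₁, z̄₂, w̄₁, w̄₂` are `⟨ζ, x⟩` or `⟨ζ, u⟩` with `ζ ∈ {e₁ - i e₂, e₃ - i e₄}`, and these
two vectors are isotropic and mutually orthogonal for the complex bilinear dot product. A
second-order operator `Σ_j ∂_{s j} ∂_{t j}` obeys a Leibniz rule whose correction terms
`Σ_j ∂_{t j} Q ∂_{s j} P` are biderivations; they vanish on pairs of such forms, hence on the algebra
these forms generate, and so `Δ_x`, `Δ_u` and `⟨∂_u,∂_x⟩` kill that whole algebra. The operators
`⟨x,∂_u⟩` and `⟨u,∂_x⟩` are derivations: the first maps `w̄ᵢ ↦ z̄ᵢ`, `z̄ᵢ ↦ 0`, the second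
`z̄ᵢ ↦ w̄ᵢ`, `w̄ᵢ ↦ 0`, and both kill the determinant `z̄₁w̄₂ - z̄₂w̄₁`. Hence `⟨x,∂_u⟩ H = 0`, and
`⟨u,∂_x⟩^n (z̄₁ⁿ R) = n! w̄₁ⁿ R` whenever `⟨u,∂_x⟩ R = 0`.
-/

lemma Derivation.sum_apply {R A κ : Type*} [CommSemiring R] [CommSemiring A] [Algebra R A]
    (S : Finset κ) (D : κ → Derivation R A A) (a : A) :
    (∑ j ∈ S, D j) a = ∑ j ∈ S, D j a := by
  show Derivation.coeFnAddMonoidHom (∑ j ∈ S, D j) a = _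
  rw [map_sum, Finset.sum_apply]
  rfl

lemma Derivation.iterate_pow_mul {R A : Type*} [CommSemiring R] [CommSemiring A] [Algebra R A]
    (D : Derivation R A A) {z w q : A} (hz : D z = w) (hw : D w = 0) (hq : D q = 0) (n : ℕ) :
    D^[n] (z ^ n * q) = n.factorial • (w ^ n * q) := by
  induction n generalizing q with
  | zero => simp
  | succ n ih =>
    have hwq : D (w * q) = 0 := by simp [hw, hq]
    have hstep : D (z ^ (n + 1) * q) = (n + 1) • (z ^ n * (w * q)) := by
      rw [D.leibniz, D.leibniz_pow, hq, hz, smul_zero, zero_add, Nat.add_sub_cancel,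
        smul_eq_mul, smul_eq_mul, nsmul_eq_mul, nsmul_eq_mul]
      ring
    rw [Function.iterate_succ_apply, hstep, iterate_map_nsmul, ih hwq, smul_smul,
      Nat.factorial_succ, pow_succ, mul_assoc]

section SecondOrder
variable {R σ ι : Type*} [CommRing R] [Fintype ι] (s t : ι → σ)

def gradPairing (Q : MvPolynomial σ R) :
    Derivation R (MvPolynomial σ R) (MvPolynomial σ R) :=
  ∑ j, pderiv (t j) Q • pderiv (s j)

lemma gradPairing_apply (Q P : MvPolynomial σ R) :
    gradPairing s t Q P = ∑ j, pderiv (t j) Q * pderiv (s j) P := by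
  simp [gradPairing, Derivation.sum_apply]

lemma gradPairing_comm (Q P : MvPolynomial σ R) :
    gradPairing s t Q P = gradPairing t s P Q := by
  simp only [gradPairing_apply, mul_comm]

lemma gradPairing_eq_zero_of_mem_adjoin {G : Set (MvPolynomial σ R)}
    (hG : ∀ g ∈ G, ∀ h ∈ G, gradPairing s t g h = 0) {P Q : MvPolynomial σ R}
    (hP : P ∈ Algebra.adjoin R G) (hQ : Q ∈ Algebra.adjoin R G) : gradPairing s t Q P = 0 := by
  -- `gradPairing` is a derivation in each argument: extend from `G × G` one argument at a time.
  have hG' : ∀ g ∈ G, ∀ Q ∈ Algebra.adjoin R G, gradPairing t s g Q = 0 := fun g hg Q hQ =>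
    Derivation.eqOn_adjoin (D2 := 0)
      (fun h hh => (gradPairing_comm s t h g).symm.trans (hG h hh g hg)) hQ
  exact Derivation.eqOn_adjoin (D2 := 0)
    (fun g hg => (gradPairing_comm s t Q g).trans (hG' g hg Q hQ)) hP

def secondOrder (P : MvPolynomial σ R) : MvPolynomial σ R :=
  ∑ j, pderiv (t j) (pderiv (s j) P)

lemma secondOrder_add (P Q : MvPolynomial σ R) :
    secondOrder s t (P + Q) = secondOrder s t P + secondOrder s t Q := by
  simp [secondOrder, Finset.sum_add_distrib]

lemma secondOrder_mul (P Q : MvPolynomial σ R) :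
    secondOrder s t (P * Q) = secondOrder s t P * Q + gradPairing s t Q P + gradPairing s t P Q +
      P * secondOrder s t Q := by
  simp only [secondOrder, gradPairing_apply, Finset.sum_mul, Finset.mul_sum,
    ← Finset.sum_add_distrib, Derivation.leibniz, map_add, smul_eq_mul]
  refine Finset.sum_congr rfl fun j _ => ?_
  ring

lemma secondOrder_eq_zero_of_mem_adjoin {G : Set (MvPolynomial σ R)}
    (hL : ∀ g ∈ G, secondOrder s t g = 0)
    (hΓ : ∀ g ∈ G, ∀ h ∈ G, gradPairing s t g h = 0)
    {P : MvPolynomial σ R} (hP : P ∈ Algebra.adjoin R G) : secondOrder s t P = 0 := by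
  induction hP using Algebra.adjoin_induction with
  | mem g hg => exact hL g hg
  | algebraMap r => simp [secondOrder]
  | add P Q _ _ hP hQ => rw [secondOrder_add, hP, hQ, add_zero]
  | mul P Q hP' hQ' hP hQ =>
    rw [secondOrder_mul, hP, hQ, gradPairing_eq_zero_of_mem_adjoin s t hΓ hP' hQ',
      gradPairing_eq_zero_of_mem_adjoin s t hΓ hQ' hP']
    simp

def directional : Derivation R (MvPolynomial σ R) (MvPolynomial σ R) :=
  ∑ j, (X (s j) : MvPolynomial σ R) • pderiv (t j)

lemma directional_apply (P : MvPolynomial σ R) :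
    directional s t P = ∑ j, X (s j) * pderiv (t j) P := by
  simp [directional, Derivation.sum_apply]

end SecondOrder

section LinearForms
variable {R ι : Type*} [CommRing R] [Fintype ι]

def side (b : Bool) (j : ι) : ι ⊕ ι := cond b (Sum.inr j) (Sum.inl j)

def linForm (b : Bool) (v : ι → R) : MvPolynomial (ι ⊕ ι) R := ∑ j, C (v j) * X (side b j)

lemma pderiv_linForm (c b : Bool) (v : ι → R) (i : ι) :
    pderiv (side c i) (linForm b v) = if b = c then C (v i) else 0 := by
  classical
  cases b <;> cases c <;> simp [linForm, side, pderiv_X, Pi.single_apply]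

lemma secondOrder_linForm (c d b : Bool) (v : ι → R) :
    secondOrder (side c) (side d) (linForm b v) = 0 := by
  simp [secondOrder, pderiv_linForm, apply_ite (pderiv _)]

lemma gradPairing_linForm (c d b b' : Bool) (v v' : ι → R) :
    gradPairing (side c) (side d) (linForm b v) (linForm b' v') =
      if b = d ∧ b' = c then C (v ⬝ᵥ v') else 0 := by
  rw [gradPairing_apply]
  simp only [pderiv_linForm]
  split_ifs <;> simp_all [dotProduct]

lemma directional_linForm (c d b : Bool) (v : ι → R) :
    directional (side c) (side d) (linForm b v) = if b = d then linForm c v else 0 := by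
  rw [directional_apply]
  simp only [pderiv_linForm]
  split_ifs <;> simp [linForm, mul_comm]

lemma secondOrder_eq_zero_of_isotropic {V : Set (ι → R)}
    (hV : ∀ v ∈ V, ∀ v' ∈ V, v ⬝ᵥ v' = 0)
    (c d : Bool) {P : MvPolynomial (ι ⊕ ι) R}
    (hP : P ∈ Algebra.adjoin R (Set.image2 linForm Set.univ V)) :
    secondOrder (side c) (side d) P = 0 := by
  refine secondOrder_eq_zero_of_mem_adjoin _ _ ?_ ?_ hP
  · rintro _ ⟨b, -, v, -, rfl⟩
    exact secondOrder_linForm c d b v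
  · rintro _ ⟨b, -, v, hv, rfl⟩ _ ⟨b', -, v', hv', rfl⟩
    simp [gradPairing_linForm, hV v hv v' hv']

def linFormDet (v v' : ι → R) : MvPolynomial (ι ⊕ ι) R :=
  linForm false v * linForm true v' - linForm false v' * linForm true v

lemma isWeightedHomogeneous_linForm {M : Type*} [AddCommMonoid M] {w : ι ⊕ ι → M} {b : Bool}
    {d : M} (hw : ∀ j, w (side b j) = d) (v : ι → R) :
    IsWeightedHomogeneous w (linForm b v) d := by
  rw [linForm, ← mem_weightedHomogeneousSubmodule]
  refine Submodule.sum_mem _ fun j _ => ?_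
  exact hw j ▸ (isWeightedHomogeneous_X R w (side b j)).C_mul (v j)

lemma directional_linFormDet {c d : Bool} (hcd : c ≠ d) (v v' : ι → R) :
    directional (side c) (side d) (linFormDet v v') = 0 := by
  obtain rfl : d = !c := by cases c <;> cases d <;> simp_all
  cases c <;> simp [linFormDet, directional_linForm, mul_comm]

def highestWeight (v v' : ι → R) (n l : ℕ) : MvPolynomial (ι ⊕ ι) R :=
  linForm false v ^ n * linFormDet v v' ^ l

lemma secondOrder_highestWeight {v v' : ι → R} (hv : v ⬝ᵥ v = 0) (hvv' : v ⬝ᵥ v' = 0)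
    (hv' : v' ⬝ᵥ v' = 0) (c d : Bool) (n l : ℕ) :
    secondOrder (side c) (side d) (highestWeight v v' n l) = 0 := by
  have hV : ∀ u ∈ ({v, v'} : Set (ι → R)), ∀ u' ∈ ({v, v'} : Set (ι → R)),
      u ⬝ᵥ u' = 0 := by
    simp only [Set.mem_insert_iff, Set.mem_singleton_iff]
    rintro u (rfl | rfl) u' (rfl | rfl) <;>
      first | assumption | exact (dotProduct_comm _ _).trans hvv'
  have hmem : ∀ b, ∀ u ∈ ({v, v'} : Set (ι → R)),
      linForm b u ∈ Algebra.adjoin R (Set.image2 linForm Set.univ {v, v'}) :=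
    fun b u hu => Algebra.subset_adjoin (Set.mem_image2_of_mem trivial hu)
  refine secondOrder_eq_zero_of_isotropic hV c d ?_
  refine mul_mem (pow_mem (hmem _ _ (by simp)) _) (pow_mem (sub_mem ?_ ?_) _) <;>
    exact mul_mem (hmem _ _ (by simp)) (hmem _ _ (by simp))

lemma directional_highestWeight (v v' : ι → R) (n l : ℕ) :
    directional (side false) (side true) (highestWeight v v' n l) = 0 := by
  simp [highestWeight, Derivation.leibniz, Derivation.leibniz_pow, directional_linForm,
    directional_linFormDet]

lemma iterate_directional_highestWeight (v v' : ι → R) (n l : ℕ) :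
    (directional (side true) (side false))^[n] (highestWeight v v' n l) =
      n.factorial • (linForm true v ^ n * linFormDet v v' ^ l) := by
  refine Derivation.iterate_pow_mul _ ?_ ?_ ?_ n
  · simp [directional_linForm]
  · simp [directional_linForm]
  · simp [Derivation.leibniz_pow, directional_linFormDet]

end LinearForms

section IsotropicVectors
variable {ι : Type*} [Fintype ι] [DecidableEq ι]

def isoVec (a b : ι) : ι → ℂ := Pi.single a 1 - Complex.I • Pi.single b 1

lemma isoVec_dotProduct_self {a b : ι} (hab : a ≠ b) : isoVec a b ⬝ᵥ isoVec a b = 0 := by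
  simp [isoVec, dotProduct_sub, dotProduct_smul, hab, hab.symm]

lemma isoVec_dotProduct_of_ne {a b c d : ι} (hac : a ≠ c) (had : a ≠ d) (hbc : b ≠ c)
    (hbd : b ≠ d) : isoVec a b ⬝ᵥ isoVec c d = 0 := by
  simp [isoVec, dotProduct_sub, dotProduct_smul, hac, had, hbc, hbd]

lemma linForm_isoVec (c : Bool) (a b : ι) :
    linForm c (isoVec a b) = X (side c a) - Complex.I • X (side c b) := by
  simp [linForm, isoVec, Pi.single_apply, sub_mul, Finset.sum_sub_distrib, smul_eq_C_mul,
    apply_ite C, ite_mul]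

end IsotropicVectors

section Bihomogeneity
variable {m : ℕ}

lemma IsBihom.mul {p q p' q' : ℕ} {P Q : PP m} (hP : IsBihom m p q P) (hQ : IsBihom m p' q' Q) :
    IsBihom m (p + p') (q + q') (P * Q) :=
  ⟨hP.1.mul hQ.1, hP.2.mul hQ.2⟩

lemma IsBihom.pow {p q : ℕ} {P : PP m} (hP : IsBihom m p q P) (n : ℕ) :
    IsBihom m (n * p) (n * q) (P ^ n) :=
  ⟨hP.1.pow n, hP.2.pow n⟩

lemma IsBihom.sub {p q : ℕ} {P Q : PP m} (hP : IsBihom m p q P) (hQ : IsBihom m p q Q) :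
    IsBihom m p q (P - Q) :=
  ⟨(weightedHomogeneousSubmodule ℂ _ p).sub_mem hP.1 hQ.1,
    (weightedHomogeneousSubmodule ℂ _ q).sub_mem hP.2 hQ.2⟩

lemma isBihom_linForm_false (v : Fin m → ℂ) : IsBihom m 1 0 (linForm false v) :=
  ⟨isWeightedHomogeneous_linForm (fun _ => rfl) v,
    isWeightedHomogeneous_linForm (fun _ => rfl) v⟩

lemma isBihom_linForm_true (v : Fin m → ℂ) : IsBihom m 0 1 (linForm true v) :=
  ⟨isWeightedHomogeneous_linForm (fun _ => rfl) v,
    isWeightedHomogeneous_linForm (fun _ => rfl) v⟩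

lemma isBihom_linFormDet (v v' : Fin m → ℂ) : IsBihom m 1 1 (linFormDet v v') :=
  ((isBihom_linForm_false v).mul (isBihom_linForm_true v')).sub
    ((isBihom_linForm_false v').mul (isBihom_linForm_true v))

lemma isBihom_highestWeight (v v' : Fin m → ℂ) (n l : ℕ) :
    IsBihom m (n + l) l (highestWeight v v' n l) := by
  simpa [highestWeight] using
    ((isBihom_linForm_false v).pow n).mul ((isBihom_linFormDet v v').pow l)

end Bihomogeneity

section Operators
variable {m : ℕ}

lemma lapX_eq_secondOrder (P : PP m) : lapX m P = secondOrder (side false) (side false) P := by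
  simp only [lapX, secondOrder, side, cond_false]

lemma lapU_eq_secondOrder (P : PP m) : lapU m P = secondOrder (side true) (side true) P := by
  simp only [lapU, secondOrder, side, cond_true]

lemma dudx_eq_secondOrder (P : PP m) : dudx m P = secondOrder (side false) (side true) P := by
  simp only [dudx, secondOrder, side, cond_false, cond_true]

lemma xdu_eq_directional (P : PP m) : xdu m P = directional (side false) (side true) P := by
  simp only [directional_apply, xdu, side, cond_false, cond_true]

lemma udx_eq_directional : udx m = directional (side true) (side false) := by
  ext1 P
  simp only [directional_apply, udx, side, cond_false, cond_true]

end Operators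

/-- the highest weight vector `H_{k,l} = z̄₁^{k−l} (z̄₁w̄₂ − z̄₂w̄₁)^l`
is a simplicial harmonic, and `⟨u,∂_x⟩^{k−l} H_{k,l}(x,u) = (−1)^l (k−l)! H_{k,l}(u,x)`. -/
theorem stmt_7 (m k l : ℕ) (hm : 4 < m) (hkl : l ≤ k) :
    ∀ z1 z2 w1 w2 : PP m,
      z1 = X (Sum.inl ⟨0, by omega⟩) - Complex.I • X (Sum.inl ⟨1, by omega⟩) →
      z2 = X (Sum.inl ⟨2, by omega⟩) - Complex.I • X (Sum.inl ⟨3, by omega⟩) →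
      w1 = X (Sum.inr ⟨0, by omega⟩) - Complex.I • X (Sum.inr ⟨1, by omega⟩) →
      w2 = X (Sum.inr ⟨2, by omega⟩) - Complex.I • X (Sum.inr ⟨3, by omega⟩) →
      IsSimp m k l (z1 ^ (k - l) * (z1 * w2 - z2 * w1) ^ l) ∧
      (udx m)^[k - l] (z1 ^ (k - l) * (z1 * w2 - z2 * w1) ^ l)
        = ((-1) ^ l * (k - l).factorial : ℂ) • (w1 ^ (k - l) * (w1 * z2 - w2 * z1) ^ l) := by
  intro z1 z2 w1 w2 hz1 hz2 hw1 hw2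
  set ζ₁ : Fin m → ℂ := isoVec ⟨0, by omega⟩ ⟨1, by omega⟩
  set ζ₂ : Fin m → ℂ := isoVec ⟨2, by omega⟩ ⟨3, by omega⟩
  obtain rfl : z1 = linForm false ζ₁ := hz1.trans (linForm_isoVec false _ _).symm
  obtain rfl : z2 = linForm false ζ₂ := hz2.trans (linForm_isoVec false _ _).symm
  obtain rfl : w1 = linForm true ζ₁ := hw1.trans (linForm_isoVec true _ _).symm
  obtain rfl : w2 = linForm true ζ₂ := hw2.trans (linForm_isoVec true _ _).symm
  have hζ₁ : ζ₁ ⬝ᵥ ζ₁ = 0 := isoVec_dotProduct_self (by simp [Fin.ext_iff])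
  have hζ₂ : ζ₂ ⬝ᵥ ζ₂ = 0 := isoVec_dotProduct_self (by simp [Fin.ext_iff])
  have hζ₁₂ : ζ₁ ⬝ᵥ ζ₂ = 0 := isoVec_dotProduct_of_ne (by simp [Fin.ext_iff])
    (by simp [Fin.ext_iff]) (by simp [Fin.ext_iff]) (by simp [Fin.ext_iff])
  have hH : linForm false ζ₁ ^ (k - l) *
      (linForm false ζ₁ * linForm true ζ₂ - linForm false ζ₂ * linForm true ζ₁) ^ l =
      highestWeight ζ₁ ζ₂ (k - l) l := rfl
  refine ⟨⟨?_, ?_, ?_, ?_, ?_⟩, ?_⟩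
  · simpa [hH, Nat.sub_add_cancel hkl] using isBihom_highestWeight ζ₁ ζ₂ (k - l) l
  · rw [hH, lapX_eq_secondOrder, secondOrder_highestWeight hζ₁ hζ₁₂ hζ₂]
  · rw [hH, lapU_eq_secondOrder, secondOrder_highestWeight hζ₁ hζ₁₂ hζ₂]
  · rw [hH, dudx_eq_secondOrder, secondOrder_highestWeight hζ₁ hζ₁₂ hζ₂]
  · rw [hH, xdu_eq_directional, directional_highestWeight]
  · have hswap :
        linForm true ζ₁ * linForm false ζ₂ - linForm true ζ₂ * linForm false ζ₁ =
          (-1 : ℂ) • linFormDet ζ₁ ζ₂ := by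
      rw [linFormDet, neg_one_smul]; ring
    rw [hH, udx_eq_directional, iterate_directional_highestWeight, hswap, smul_pow, mul_smul_comm,
      smul_smul, mul_right_comm, ← mul_pow, neg_one_mul, neg_neg, one_pow, one_mul,
      Nat.cast_smul_eq_nsmul]
end
end

section
/- Let m > 4. The transvector-algebra generators are pairwise Fischer adjoint: (i) for every double harmonic P ∈ 𝒫_{p,q} and every double harmonic Q ∈ 𝒫_{p+1,q+1}, [C P, Q]_F = [P, A Q]_F; (ii) for every double harmonic P ∈ 𝒫_{p,q} and every double harmonic Q ∈ 𝒫_{p−1,q+1}, [S_u P, Q]_F = [P, S_x Q]_F. -/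
open MvPolynomial

noncomputable section

/-- The differential monomial `∂^d`: apply `∂_i` exactly `d i` times, for each
variable `i`. -/
def derivMon (m : ℕ) (d : (Fin m ⊕ Fin m) →₀ ℕ) (Q : PP m) : PP m :=
  (Finset.univ : Finset (Fin m ⊕ Fin m)).toList.foldr
    (fun i R => (fun S => pderiv i S)^[d i] R) Q

/-- The Fischer inner product `[P,Q]_F = (P̄(∂)Q)(0)`: conjugate the coefficients of
`P`, replace its variables by the corresponding partial derivatives, apply the
resulting constant-coefficient differential operator to `Q`, and evaluate at `0`. -/
def fischer (m : ℕ) (P Q : PP m) : ℂ :=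
  eval (fun _ => 0)
    (∑ d ∈ P.support, (starRingEnd ℂ) (P.coeff d) • derivMon m d Q)

/-!
Expanding `P̄(∂)` monomial by monomial gives `[P,Q]_F = Σ_d conj(P_d) d! Q_d`, so multiplication
by a variable is Fischer adjoint to differentiation in that variable. Hence multiplication by
`⟨u,x⟩`, `|x|²`, `|u|²` is adjoint to `⟨∂_u,∂_x⟩`, `Δ_x`, `Δ_u`, and `⟨u,∂_x⟩` is adjoint to
`⟨x,∂_u⟩`. Every correction term of `C P` carries a factor `|x|²` or `|u|²`, so it pairs to zero
with the double harmonic `Q`, leaving `[⟨u,x⟩P, Q]_F = [P, A Q]_F`. Likewise the `|u|²`-term of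
`S_u P` dies against `Q` and the `|x|²`-term of `S_x Q` dies against `P`, leaving
`[⟨u,∂_x⟩P, Q]_F = [P, ⟨x,∂_u⟩Q]_F`.
-/

open ComplexConjugate Nat

section IteratePDeriv

variable {R σ : Type*} [CommSemiring R]

theorem coeff_iterate_pderiv (i : σ) (n : ℕ) (e : σ →₀ ℕ) (p : MvPolynomial σ R) :
    coeff e ((pderiv i)^[n] p) =
      ((e i + 1).ascFactorial n : R) * coeff (e + Finsupp.single i n) p := by
  induction n generalizing p with
  | zero => simp
  | succ n ih =>
    rw [Function.iterate_succ_apply, ih, coeff_pderiv, Nat.ascFactorial_succ, add_assoc,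
      ← Finsupp.single_add]
    simp only [Finsupp.add_apply, Finsupp.single_eq_same]
    push_cast
    ring

theorem coeff_foldr_iterate_pderiv (d : σ →₀ ℕ) {l : List σ} (hl : l.Nodup) (e : σ →₀ ℕ)
    (p : MvPolynomial σ R) :
    coeff e (l.foldr (fun i q => (pderiv i)^[d i] q) p) =
      (l.map fun j => ((e j + 1).ascFactorial (d j) : R)).prod *
        coeff (e + (l.map fun j => Finsupp.single j (d j)).sum) p := by
  induction l generalizing e with
  | nil => simp
  | cons i l ih =>
    obtain ⟨hi, hl⟩ := List.nodup_cons.1 hl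
    have shift : ∀ j ∈ l, (e + Finsupp.single i (d i)) j = e j := fun j hj => by
      simp [ne_of_mem_of_not_mem hj hi]
    rw [List.foldr_cons, coeff_iterate_pderiv, ih hl, List.map_congr_left
      (fun j hj => by rw [shift j hj]), List.map_cons, List.prod_cons, List.map_cons,
      List.sum_cons, add_assoc, mul_assoc]

end IteratePDeriv

theorem prod_factorial_single_add {R σ : Type*} [CommSemiring R] [Fintype σ] (i : σ)
    (e : σ →₀ ℕ) :
    ∏ j, (((Finsupp.single i 1 + e : σ →₀ ℕ) j)! : R) = (e i + 1) * ∏ j, ((e j)! : R) := by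
  classical
  rw [Fintype.prod_eq_mul_prod_compl i, Fintype.prod_eq_mul_prod_compl i, ← mul_assoc]
  congr 1
  · simp [add_comm 1, Nat.factorial_succ]
  · refine Finset.prod_congr rfl fun j hj => ?_
    simp [Ne.symm (by simpa using hj : j ≠ i)]

section Fischer

variable {m : ℕ}

theorem eval_zero_derivMon (d : Fin m ⊕ Fin m →₀ ℕ) (Q : PP m) :
    eval (fun _ => 0) (derivMon m d Q) = (∏ i, ((d i)! : ℂ)) * coeff d Q := by
  rw [eval_zero', constantCoeff_eq, derivMon,
    coeff_foldr_iterate_pderiv _ (Finset.nodup_toList _)]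
  simp [Finset.prod_map_toList, Finset.sum_map_toList, Finsupp.univ_sum_single]

theorem fischer_eq_sum (P Q : PP m) :
    fischer m P Q = ∑ d ∈ P.support, conj (coeff d P) * ((∏ i, ((d i)! : ℂ)) * coeff d Q) := by
  simp only [fischer, map_sum, smul_eval, eval_zero_derivMon]

theorem fischer_eq_sum_of_support_subset {P : PP m} {s : Finset (Fin m ⊕ Fin m →₀ ℕ)}
    (hs : P.support ⊆ s) (Q : PP m) :
    fischer m P Q = ∑ d ∈ s, conj (coeff d P) * ((∏ i, ((d i)! : ℂ)) * coeff d Q) := by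
  rw [fischer_eq_sum]
  exact Finset.sum_subset hs fun d _ hd => by simp [notMem_support_iff.1 hd]

theorem fischer_conj_symm (P Q : PP m) : conj (fischer m Q P) = fischer m P Q := by
  classical
  rw [fischer_eq_sum_of_support_subset (Finset.subset_union_right (s₁ := P.support)),
    fischer_eq_sum_of_support_subset (Finset.subset_union_left (s₂ := Q.support)), map_sum]
  refine Finset.sum_congr rfl fun d _ => ?_
  simp only [map_mul, map_prod, map_natCast, Complex.conj_conj]
  ring

@[simp]
theorem fischer_zero_left (Q : PP m) : fischer m 0 Q = 0 := by
  simp [fischer_eq_sum]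

@[simp]
theorem fischer_zero_right (P : PP m) : fischer m P 0 = 0 := by
  simp [fischer_eq_sum]

theorem fischer_add_right (P Q₁ Q₂ : PP m) :
    fischer m P (Q₁ + Q₂) = fischer m P Q₁ + fischer m P Q₂ := by
  simp only [fischer_eq_sum, coeff_add, mul_add, Finset.sum_add_distrib]

theorem fischer_sub_right (P Q₁ Q₂ : PP m) :
    fischer m P (Q₁ - Q₂) = fischer m P Q₁ - fischer m P Q₂ := by
  simp only [fischer_eq_sum, coeff_sub, mul_sub, Finset.sum_sub_distrib]

theorem fischer_smul_right (c : ℂ) (P Q : PP m) :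
    fischer m P (c • Q) = c * fischer m P Q := by
  simp only [fischer_eq_sum, coeff_smul, smul_eq_mul, Finset.mul_sum]
  exact Finset.sum_congr rfl fun _ _ => by ring

theorem fischer_sum_right {ι : Type*} (s : Finset ι) (P : PP m) (Q : ι → PP m) :
    fischer m P (∑ j ∈ s, Q j) = ∑ j ∈ s, fischer m P (Q j) := by
  simp only [fischer_eq_sum, coeff_sum, Finset.mul_sum]
  exact Finset.sum_comm

theorem fischer_add_left (P₁ P₂ Q : PP m) :
    fischer m (P₁ + P₂) Q = fischer m P₁ Q + fischer m P₂ Q := by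
  rw [← fischer_conj_symm, fischer_add_right, map_add, fischer_conj_symm, fischer_conj_symm]

theorem fischer_sub_left (P₁ P₂ Q : PP m) :
    fischer m (P₁ - P₂) Q = fischer m P₁ Q - fischer m P₂ Q := by
  rw [← fischer_conj_symm, fischer_sub_right, map_sub, fischer_conj_symm, fischer_conj_symm]

theorem fischer_smul_left (c : ℂ) (P Q : PP m) :
    fischer m (c • P) Q = conj c * fischer m P Q := by
  rw [← fischer_conj_symm, fischer_smul_right, map_mul, fischer_conj_symm]

theorem fischer_sum_left {ι : Type*} (s : Finset ι) (P : ι → PP m) (Q : PP m) :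
    fischer m (∑ j ∈ s, P j) Q = ∑ j ∈ s, fischer m (P j) Q := by
  rw [← fischer_conj_symm, fischer_sum_right, map_sum]
  simp only [fischer_conj_symm]

theorem fischer_X_mul (i : Fin m ⊕ Fin m) (P Q : PP m) :
    fischer m (X i * P) Q = fischer m P (pderiv i Q) := by
  rw [fischer_eq_sum, support_X_mul, Finset.sum_map, fischer_eq_sum]
  refine Finset.sum_congr rfl fun e _ => ?_
  simp only [addLeftEmbedding_apply, coeff_X_mul, coeff_pderiv, prod_factorial_single_add,
    add_comm e]
  ring

theorem fischer_pderiv (i : Fin m ⊕ Fin m) (P Q : PP m) :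
    fischer m (pderiv i P) Q = fischer m P (X i * Q) := by
  rw [← fischer_conj_symm, ← fischer_X_mul, fischer_conj_symm]

end Fischer

section Adjoints

variable {m : ℕ}

theorem fischer_sum_X_mul_X_mul {ι : Type*} (s : Finset ι) (a b : ι → Fin m ⊕ Fin m)
    (R Q : PP m) :
    fischer m ((∑ j ∈ s, X (a j) * X (b j)) * R) Q =
      fischer m R (∑ j ∈ s, pderiv (b j) (pderiv (a j) Q)) := by
  simp only [Finset.sum_mul, mul_assoc, fischer_sum_left, fischer_sum_right, fischer_X_mul]

theorem fischer_nx2_mul (R Q : PP m) : fischer m (nx2 m * R) Q = fischer m R (lapX m Q) := by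
  simpa only [nx2, lapX, sq] using fischer_sum_X_mul_X_mul Finset.univ Sum.inl Sum.inl R Q

theorem fischer_nu2_mul (R Q : PP m) : fischer m (nu2 m * R) Q = fischer m R (lapU m Q) := by
  simpa only [nu2, lapU, sq] using fischer_sum_X_mul_X_mul Finset.univ Sum.inr Sum.inr R Q

theorem fischer_mul_nx2 (P R : PP m) : fischer m P (nx2 m * R) = fischer m (lapX m P) R := by
  rw [← fischer_conj_symm, fischer_nx2_mul, fischer_conj_symm]

theorem fischer_uxP_mul (P Q : PP m) : fischer m (uxP m * P) Q = fischer m P (dudx m Q) := by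
  simpa only [uxP, dudx, mul_comm (X (Sum.inr _))] using
    fischer_sum_X_mul_X_mul Finset.univ Sum.inl Sum.inr P Q

theorem fischer_udx (P Q : PP m) : fischer m (udx m P) Q = fischer m P (xdu m Q) := by
  simp only [udx, xdu, fischer_sum_left, fischer_sum_right, fischer_X_mul, fischer_pderiv]

end Adjoints

theorem stmt_16_general (m : ℕ) :
    (∀ p q : ℕ, ∀ P Q : PP m,
      IsBihom m p q P → lapX m P = 0 → lapU m P = 0 →
      IsBihom m (p + 1) (q + 1) Q → lapX m Q = 0 → lapU m Q = 0 →
      fischer m (opC m (p : ℤ) (q : ℤ) P) Q = fischer m P (opA m Q)) ∧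
    (∀ p q : ℕ, 1 ≤ p → ∀ P Q : PP m,
      IsBihom m p q P → lapX m P = 0 → lapU m P = 0 →
      IsBihom m (p - 1) (q + 1) Q → lapX m Q = 0 → lapU m Q = 0 →
      fischer m (opSu m (q : ℤ) P) Q = fischer m P (opSx m ((p : ℤ) - 1) Q)) := by
  constructor
  · intro p q P Q _ _ _ _ hQx hQu
    simp only [opC, opA, fischer_add_left, fischer_sub_left, fischer_smul_left, fischer_uxP_mul,
      fischer_nx2_mul, fischer_nu2_mul, hQx, hQu, fischer_zero_right, mul_zero, sub_zero,
      add_zero]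
  · intro p q _ P Q _ hPx _ _ _ hQu
    simp only [opSu, opSx, fischer_sub_left, fischer_sub_right, fischer_smul_left,
      fischer_smul_right, fischer_nu2_mul, fischer_mul_nx2, fischer_udx, hQu, hPx,
      fischer_zero_left, fischer_zero_right, mul_zero, sub_zero]

/-- the transvector generators are pairwise Fischer adjoint:
`[C P, Q]_F = [P, A Q]_F` and `[S_u P, Q]_F = [P, S_x Q]_F` on double harmonics. -/
theorem stmt_16 (m : ℕ) (hm : 4 < m) :
    (∀ p q : ℕ, ∀ P Q : PP m,
      IsBihom m p q P → lapX m P = 0 → lapU m P = 0 →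
      IsBihom m (p + 1) (q + 1) Q → lapX m Q = 0 → lapU m Q = 0 →
      fischer m (opC m (p : ℤ) (q : ℤ) P) Q = fischer m P (opA m Q)) ∧
    (∀ p q : ℕ, 1 ≤ p → ∀ P Q : PP m,
      IsBihom m p q P → lapX m P = 0 → lapU m P = 0 →
      IsBihom m (p - 1) (q + 1) Q → lapX m Q = 0 → lapU m Q = 0 →
      fischer m (opSu m (q : ℤ) P) Q = fischer m P (opSx m ((p : ℤ) - 1) Q)) :=
  stmt_16_general m
end
end

section
/- Let m > 4 and β ∈ ℕ, and let C^β[1] denote the result of applying the operator C β times to the constant polynomial 1 (which lies in 𝒫_{0,0} and is double harmonic; each application of C is taken on the appropriate bidegree). Then C^β[1] is, up to normalisation, the zonal polynomial associated with the Gegenbauer polynomial C_β^{(m/2−1)}: explicitly, C^β[1] = β! · Σ_{j=0}^{⌊β/2⌋} ((−1)^j / (4^j · (β + m/2 − 2)_{(j)} · j! · (β − 2j)!)) ⟨u,x⟩^{β−2j} |x|^{2j} |u|^{2j}, where (β + m/2 − 2)_{(j)} = (β+m/2−2)(β+m/2−3)⋯(β+m/2−1−j) is the falling factorial; equivalently the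 coefficient of ⟨u,x⟩^{β−2j}|x|^{2j}|u|^{2j} equals (β! Γ(m/2−1)/(2^β Γ(β+m/2−1))) · (−1)^j 2^{β−2j} Γ(β−j+m/2−1)/(Γ(m/2−1) j! (β−2j)!). (In particular C^β[1] is double harmonic, and for β = 1,2 it equals ⟨u,x⟩ and ⟨u,x⟩² − |x|²|u|²/m respectively.) -/
open MvPolynomial

noncomputable section

/-!
On the invariant products `⟨u,x⟩^a |x|^{2i} |u|^{2i}` of total degree `b = a + 2i`, the operator
`C` taken at bidegree `(b,b)` acts by a two-term formula: it either multiplies by `⟨u,x⟩`, or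
trades one factor `⟨u,x⟩` for `|x|²|u|²`. Hence every `C^b[1]` is a combination of such
products, and the coefficients obey a two-term recursion in `b`. Writing `b!/(b-2j)!` as the
descending Pochhammer value `(b)_{2j}`, which vanishes for `2j > b`, the Gegenbauer coefficients
are seen to solve this recursion by a rational-function identity, with no boundary cases.
-/

namespace ZonalHarmonic

open Finset

variable {m : ℕ}

lemma pderiv_inl_uxP (k : Fin m) : pderiv (Sum.inl k) (uxP m) = X (Sum.inr k) := by
  simp [uxP, pderiv_X, Pi.single_apply]

lemma pderiv_inr_uxP (k : Fin m) : pderiv (Sum.inr k) (uxP m) = X (Sum.inl k) := by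
  simp [uxP, pderiv_X, Pi.single_apply]

lemma pderiv_inl_nx2 (k : Fin m) : pderiv (Sum.inl k) (nx2 m) = 2 * X (Sum.inl k) := by
  simp [nx2, pderiv_X, Pi.single_apply]

lemma pderiv_inr_nx2 (k : Fin m) : pderiv (Sum.inr k) (nx2 m) = 0 := by
  simp [nx2, pderiv_X]

lemma pderiv_inl_nu2 (k : Fin m) : pderiv (Sum.inl k) (nu2 m) = 0 := by
  simp [nu2, pderiv_X]

lemma pderiv_inr_nu2 (k : Fin m) : pderiv (Sum.inr k) (nu2 m) = 2 * X (Sum.inr k) := by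
  simp [nu2, pderiv_X, Pi.single_apply]

def invariantMonomial (m a i j : ℕ) : PP m := uxP m ^ a * (nx2 m ^ i * nu2 m ^ j)

lemma pderiv_inl_invariantMonomial (a i j : ℕ) (k : Fin m) :
    pderiv (Sum.inl k) (invariantMonomial m a i j)
      = (a : ℂ) • (X (Sum.inr k) * invariantMonomial m (a - 1) i j)
        + (2 * i : ℂ) • (X (Sum.inl k) * invariantMonomial m a (i - 1) j) := by
  simp only [invariantMonomial, pderiv_mul, pderiv_pow, pderiv_inl_uxP, pderiv_inl_nx2,
    pderiv_inl_nu2, smul_eq_C_mul, C_mul, C_eq_coe_nat, map_ofNat]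
  ring

lemma pderiv_inr_invariantMonomial (a i j : ℕ) (k : Fin m) :
    pderiv (Sum.inr k) (invariantMonomial m a i j)
      = (a : ℂ) • (X (Sum.inl k) * invariantMonomial m (a - 1) i j)
        + (2 * j : ℂ) • (X (Sum.inr k) * invariantMonomial m a i (j - 1)) := by
  simp only [invariantMonomial, pderiv_mul, pderiv_pow, pderiv_inr_uxP, pderiv_inr_nx2,
    pderiv_inr_nu2, smul_eq_C_mul, C_mul, C_eq_coe_nat, map_ofNat]
  ring

lemma sum_X_inl_mul_X_inl_mul (G : PP m) :
    ∑ k : Fin m, X (Sum.inl k) * (X (Sum.inl k) * G) = nx2 m * G := by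
  simp only [nx2, sum_mul, ← mul_assoc, sq]

lemma sum_X_inr_mul_X_inr_mul (G : PP m) :
    ∑ k : Fin m, X (Sum.inr k) * (X (Sum.inr k) * G) = nu2 m * G := by
  simp only [nu2, sum_mul, ← mul_assoc, sq]

lemma sum_X_inr_mul_X_inl_mul (G : PP m) :
    ∑ k : Fin m, X (Sum.inr k) * (X (Sum.inl k) * G) = uxP m * G := by
  simp only [uxP, sum_mul, ← mul_assoc]

lemma sum_X_inl_mul_X_inr_mul (G : PP m) :
    ∑ k : Fin m, X (Sum.inl k) * (X (Sum.inr k) * G) = uxP m * G := by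
  simp only [mul_left_comm (X (Sum.inl _) : PP m), sum_X_inr_mul_X_inl_mul]

lemma udx_invariantMonomial (a i j : ℕ) :
    udx m (invariantMonomial m a i j)
      = (a : ℂ) • (nu2 m * invariantMonomial m (a - 1) i j)
        + (2 * i : ℂ) • (uxP m * invariantMonomial m a (i - 1) j) := by
  simp only [udx, pderiv_inl_invariantMonomial, mul_add, mul_smul_comm, sum_add_distrib,
    ← smul_sum, sum_X_inr_mul_X_inr_mul, sum_X_inr_mul_X_inl_mul]

lemma xdu_invariantMonomial (a i j : ℕ) :
    xdu m (invariantMonomial m a i j)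
      = (a : ℂ) • (nx2 m * invariantMonomial m (a - 1) i j)
        + (2 * j : ℂ) • (uxP m * invariantMonomial m a i (j - 1)) := by
  simp only [xdu, pderiv_inr_invariantMonomial, mul_add, mul_smul_comm, sum_add_distrib,
    ← smul_sum, sum_X_inl_mul_X_inl_mul, sum_X_inl_mul_X_inr_mul]

lemma dudx_invariantMonomial (a i j : ℕ) :
    dudx m (invariantMonomial m a i j)
      = (a * m : ℂ) • invariantMonomial m (a - 1) i j
        + (a * (a - 1 : ℕ) : ℂ) • (uxP m * invariantMonomial m (a - 2) i j)
        + (2 * a * j : ℂ) • (nu2 m * invariantMonomial m (a - 1) i (j - 1))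
        + (2 * i * a : ℂ) • (nx2 m * invariantMonomial m (a - 1) (i - 1) j)
        + (4 * i * j : ℂ) • (uxP m * invariantMonomial m a (i - 1) (j - 1)) := by
  have hk : ∀ k : Fin m,
      pderiv (Sum.inr k) (pderiv (Sum.inl k) (invariantMonomial m a i j))
        = (a : ℂ) • invariantMonomial m (a - 1) i j
          + (a * (a - 1 : ℕ) : ℂ) •
              (X (Sum.inr k) * (X (Sum.inl k) * invariantMonomial m (a - 2) i j))
          + (2 * a * j : ℂ) •
              (X (Sum.inr k) * (X (Sum.inr k) * invariantMonomial m (a - 1) i (j - 1)))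
          + (2 * i * a : ℂ) •
              (X (Sum.inl k) * (X (Sum.inl k) * invariantMonomial m (a - 1) (i - 1) j))
          + (4 * i * j : ℂ) •
              (X (Sum.inl k) * (X (Sum.inr k) * invariantMonomial m a (i - 1) (j - 1))) := by
    intro k
    rw [pderiv_inl_invariantMonomial, map_add, Derivation.map_smul, Derivation.map_smul,
      pderiv_mul, pderiv_mul, pderiv_X_self, pderiv_X_of_ne (by simp),
      pderiv_inr_invariantMonomial, pderiv_inr_invariantMonomial, Nat.sub_sub]
    simp only [smul_eq_C_mul, C_mul, C_eq_coe_nat, map_ofNat]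
    ring
  simp only [dudx, hk, sum_add_distrib, ← smul_sum, sum_X_inr_mul_X_inr_mul,
    sum_X_inr_mul_X_inl_mul, sum_X_inl_mul_X_inl_mul, sum_X_inl_mul_X_inr_mul, sum_const,
    card_univ, Fintype.card_fin, nsmul_eq_mul]
  simp only [smul_eq_C_mul, C_mul, C_eq_coe_nat]
  ring

lemma nx2_mul_udx_invariantMonomial (a i : ℕ) :
    nx2 m * udx m (invariantMonomial m a i i)
      = (a : ℂ) • invariantMonomial m (a - 1) (i + 1) (i + 1)
        + (2 * i : ℂ) • invariantMonomial m (a + 1) i i := by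
  rw [udx_invariantMonomial]
  rcases i with _ | i <;>
  · simp only [invariantMonomial, smul_eq_C_mul, C_mul, C_eq_coe_nat, Nat.add_sub_cancel]
    push_cast
    ring

lemma nu2_mul_xdu_invariantMonomial (a i : ℕ) :
    nu2 m * xdu m (invariantMonomial m a i i)
      = (a : ℂ) • invariantMonomial m (a - 1) (i + 1) (i + 1)
        + (2 * i : ℂ) • invariantMonomial m (a + 1) i i := by
  rw [xdu_invariantMonomial]
  rcases i with _ | i <;>
  · simp only [invariantMonomial, smul_eq_C_mul, C_mul, C_eq_coe_nat, Nat.add_sub_cancel]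
    push_cast
    ring

lemma nx2_mul_nu2_mul_dudx_invariantMonomial (a i : ℕ) :
    nx2 m * (nu2 m * dudx m (invariantMonomial m a i i))
      = (a * (a - 1 + m + 4 * i) : ℂ) • invariantMonomial m (a - 1) (i + 1) (i + 1)
        + (4 * i ^ 2 : ℂ) • invariantMonomial m (a + 1) i i := by
  rw [dudx_invariantMonomial]
  rcases a with _ | _ | a <;> rcases i with _ | i <;>
  · simp only [invariantMonomial, smul_eq_C_mul, C_mul, C_add, C_sub, C_pow, C_1, C_eq_coe_nat,
      map_ofNat, Nat.add_sub_cancel]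
    push_cast
    ring

def opCCoeffUx (m b i : ℕ) : ℂ := (1 - 2 * i * (2 * b + m - 2 : ℂ)⁻¹) ^ 2

def opCCoeffNorm (m b i : ℕ) : ℂ :=
  (b - 2 * i : ℂ) * (2 * b + m - 2 : ℂ)⁻¹ * ((b + 2 * i + m - 1) * (2 * b + m - 2 : ℂ)⁻¹ - 2)

lemma opC_invariantMonomial {a i b : ℕ} (hb : a + 2 * i = b) :
    opC m b b (invariantMonomial m a i i)
      = opCCoeffUx m b i • invariantMonomial m (a + 1) i i
        + opCCoeffNorm m b i • invariantMonomial m (a - 1) (i + 1) (i + 1) := by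
  have hmul : uxP m * invariantMonomial m a i i = invariantMonomial m (a + 1) i i := by
    rw [invariantMonomial, invariantMonomial]; ring
  rw [opC, hmul, nx2_mul_udx_invariantMonomial, nu2_mul_xdu_invariantMonomial,
    nx2_mul_nu2_mul_dudx_invariantMonomial, mul_inv, opCCoeffUx, opCCoeffNorm, ← hb]
  push_cast
  match_scalars <;> ring

@[simps]
def opCLinear (m : ℕ) (p q : ℤ) : PP m →ₗ[ℂ] PP m where
  toFun := opC m p q
  map_add' P Q := by
    simp only [opC, udx, xdu, dudx, map_add, mul_add, sum_add_distrib, smul_add]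
    abel
  map_smul' c P := by
    simp only [opC, udx, xdu, dudx, Derivation.map_smul, mul_smul_comm, ← smul_sum, smul_sub,
      smul_add, smul_comm c, RingHom.id_apply]

lemma descPochhammer_succ_eval_add_one {R : Type*} [CommRing R] (n : ℕ) (x : R) :
    (descPochhammer R (n + 1)).eval (x + 1) = (x + 1) * (descPochhammer R n).eval x := by
  simp [descPochhammer_succ_left]

lemma descPochhammer_eval_ofReal_ne_zero {n : ℕ} {s : ℝ} (h : (n : ℝ) - 1 < s) :
    (descPochhammer ℂ n).eval (s : ℂ) ≠ 0 := by
  rw [← descPochhammer_map Complex.ofRealHom, Polynomial.eval_map, ← Complex.ofRealHom_eq_coe,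
    Polynomial.eval₂_at_apply]
  exact Complex.ofReal_ne_zero.mpr (descPochhammer_pos h).ne'

def zonalCoeff (m b j : ℕ) : ℂ :=
  (-1) ^ j * (descPochhammer ℂ (2 * j)).eval (b : ℂ)
    / (4 ^ j * j.factorial * (descPochhammer ℂ j).eval ((b : ℂ) + m / 2 - 2))

lemma zonalCoeff_succ_zero (b : ℕ) :
    zonalCoeff m (b + 1) 0 = zonalCoeff m b 0 * opCCoeffUx m b 0 := by
  simp [zonalCoeff, opCCoeffUx]

lemma zonalCoeff_succ_succ (hm : 4 < m) {b j : ℕ} (hj : j ≤ b) :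
    zonalCoeff m (b + 1) (j + 1)
      = zonalCoeff m b (j + 1) * opCCoeffUx m b (j + 1)
        + zonalCoeff m b j * opCCoeffNorm m b j := by
  have hm' : (5 : ℝ) ≤ m := by exact_mod_cast hm
  have hjb : (j : ℝ) ≤ b := by exact_mod_cast hj
  have hgR : (b : ℂ) + m / 2 - 2 = ((b + m / 2 - 2 : ℝ) : ℂ) := by push_cast; rfl
  have hP : (descPochhammer ℂ j).eval ((b : ℂ) + m / 2 - 2) ≠ 0 := by
    rw [hgR]; exact descPochhammer_eval_ofReal_ne_zero (by linarith)
  have hgj : (b : ℂ) + m / 2 - 2 - j ≠ 0 := by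
    rw [hgR, ← Complex.ofReal_natCast, ← Complex.ofReal_sub, Complex.ofReal_ne_zero]; linarith
  have hg1 : (b : ℂ) + m / 2 - 2 + 1 ≠ 0 := by
    rw [hgR, ← Complex.ofReal_one, ← Complex.ofReal_add, Complex.ofReal_ne_zero]; linarith
  unfold zonalCoeff opCCoeffUx opCCoeffNorm
  rw [show ((b + 1 : ℕ) : ℂ) + m / 2 - 2 = (b : ℂ) + m / 2 - 2 + 1 by push_cast; ring,
    show (2 * b + m - 2 : ℂ) = 2 * ((b : ℂ) + m / 2 - 2 + 1) by ring,
    show 2 * (j + 1) = 2 * j + 1 + 1 by ring, Nat.cast_succ b,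
    descPochhammer_succ_eval_add_one, descPochhammer_succ_eval_add_one]
  simp only [descPochhammer_succ_eval, Nat.factorial_succ]
  -- with `m` expressed through `g`, all denominators are polynomials in the single atom `g`
  generalize hg : (b : ℂ) + m / 2 - 2 = g at *
  rw [show (m : ℂ) = 2 * (g - b + 2) by rw [← hg]; ring]
  push_cast
  field_simp
  ring

def zonal (m b : ℕ) : PP m :=
  ∑ j ∈ range (b / 2 + 1), zonalCoeff m b j • invariantMonomial m (b - 2 * j) j j

lemma zonalCoeff_eq_zero {b j : ℕ} (h : b < 2 * j) : zonalCoeff m b j = 0 := by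
  simp [zonalCoeff, descPochhammer_eval_eq_descFactorial, Nat.descFactorial_eq_zero_iff_lt.mpr h]

lemma zonal_eq_sum_range {b n : ℕ} (hn : b / 2 < n) :
    zonal m b = ∑ j ∈ range n, zonalCoeff m b j • invariantMonomial m (b - 2 * j) j j := by
  refine sum_subset (range_subset_range.mpr (by omega)) fun j _ hj => ?_
  rw [zonalCoeff_eq_zero (by simp only [mem_range] at hj; omega), zero_smul]

lemma zonal_zero : zonal m 0 = 1 := by
  simp [zonal, zonalCoeff, invariantMonomial]

lemma opC_zonal (hm : 4 < m) (b : ℕ) : opC m b b (zonal m b) = zonal m (b + 1) := by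
  obtain ⟨n, hn⟩ : ∃ n, b / 2 + 1 = n := ⟨_, rfl⟩
  have himage : opC m b b (zonal m b)
      = ∑ j ∈ range n, (zonalCoeff m b j * opCCoeffUx m b j) •
            invariantMonomial m (b + 1 - 2 * j) j j
        + ∑ j ∈ range n, (zonalCoeff m b j * opCCoeffNorm m b j) •
            invariantMonomial m (b + 1 - 2 * (j + 1)) (j + 1) (j + 1) := by
    rw [← opCLinear_apply, zonal_eq_sum_range (n := n) (by omega), map_sum, ← sum_add_distrib]
    refine sum_congr rfl fun j hj => ?_
    have hj : 2 * j ≤ b := by simp only [mem_range] at hj; omega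
    rw [map_smul, opCLinear_apply, opC_invariantMonomial (by omega : b - 2 * j + 2 * j = b),
      smul_add, smul_smul, smul_smul, show b - 2 * j + 1 = b + 1 - 2 * j by omega,
      show b - 2 * j - 1 = b + 1 - 2 * (j + 1) by omega]
  have hpad : ∑ j ∈ range n, (zonalCoeff m b j * opCCoeffUx m b j) •
        invariantMonomial m (b + 1 - 2 * j) j j
      = ∑ j ∈ range (n + 1), (zonalCoeff m b j * opCCoeffUx m b j) •
        invariantMonomial m (b + 1 - 2 * j) j j := by
    rw [sum_range_succ, zonalCoeff_eq_zero (by omega), zero_mul, zero_smul, add_zero]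
  rw [himage, hpad, zonal_eq_sum_range (n := n + 1) (by omega), sum_range_succ' _ n,
    sum_range_succ' _ n, zonalCoeff_succ_zero, add_right_comm, ← sum_add_distrib]
  congr 1
  refine sum_congr rfl fun j hj => ?_
  rw [zonalCoeff_succ_succ hm (by simp only [mem_range] at hj; omega), add_smul]

lemma CIter_zonal (hm : 4 < m) (n b : ℕ) : CIter m n b b (zonal m b) = zonal m (b + n) := by
  induction n generalizing b with
  | zero => rfl
  | succ n ih =>
    rw [CIter, opC_zonal hm, show (b : ℤ) + 1 = (b + 1 : ℕ) by push_cast; rfl, ih,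
      Nat.add_right_comm, add_assoc]

lemma desc_eq_eval_descPochhammer (a : ℂ) (n : ℕ) : desc a n = (descPochhammer ℂ n).eval a := by
  induction n with
  | zero => simp [desc]
  | succ n ih => rw [desc, ih, descPochhammer_succ_eval]

lemma zonalCoeff_eq {b j : ℕ} (h : 2 * j ≤ b) :
    zonalCoeff m b j = (b.factorial : ℂ) * (-1) ^ j
      / (4 ^ j * desc ((b : ℂ) + m / 2 - 2) j * j.factorial * ((b - 2 * j).factorial : ℂ)) := by
  rw [zonalCoeff, desc_eq_eval_descPochhammer, descPochhammer_eval_eq_descFactorial,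
    ← Nat.factorial_mul_descFactorial h]
  push_cast
  field_simp
  exact (mul_div_mul_right _ _ (Nat.cast_ne_zero.mpr (Nat.factorial_ne_zero _))).symm

end ZonalHarmonic

/-- `C^β[1]` is the zonal (Gegenbauer) polynomial:
`C^β[1] = β! Σ_{j=0}^{⌊β/2⌋} ((−1)^j/(4^j (β+m/2−2)_{(j)} j! (β−2j)!))
⟨u,x⟩^{β−2j} |x|^{2j} |u|^{2j}`. -/
theorem stmt_19 (m b : ℕ) (hm : 4 < m) :
    CIter m b 0 0 1
      = ∑ j ∈ Finset.range (b / 2 + 1),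
          ((b.factorial : ℂ) * (-1) ^ j
              / (4 ^ j * desc ((b : ℂ) + m / 2 - 2) j * j.factorial
                  * ((b - 2 * j).factorial : ℂ))) •
            (uxP m ^ (b - 2 * j) * (nx2 m ^ j * nu2 m ^ j)) := by
  calc CIter m b 0 0 1 = ZonalHarmonic.zonal m b := by
        simpa [ZonalHarmonic.zonal_zero] using ZonalHarmonic.CIter_zonal hm b 0
    _ = _ := Finset.sum_congr rfl fun j hj => by
        rw [ZonalHarmonic.zonalCoeff_eq (by simp only [Finset.mem_range] at hj; omega)]
        rfl
end
end
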